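/- arXiv:1610.07553 — 2 statements merged into one kernel-verified Lean document; each statement's English description precedes it below -/
import Mathlib

section
/- Let M be a set of finite sequences of natural numbers that are pairwise incomparable under the initial-segment relation. Then every element of Ω_M has exactly one representation of the form η₀⌢⟨2n₀+1⟩⌢η₁⌢⟨2n₁+1⟩⌢⋯⌢⟨2n_{k−1}+1⟩⌢η_k with k ∈ ℕ, n₀,…,n_{k−1} ∈ ℕ and η₀,…,η_k ∈ M; that is, the number k, the sequences η₀,…,η_k ∈ M and the numbers n₀,…,n_{k−1} are uniquely determined. -/
/-- The tree conditions (i)-(iii) on `Λ` from the definition of `Y_ε`. -/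
def LamTree (Λ : Set (List ℕ)) : Prop :=
  Λ.Nonempty ∧
  (∀ ρ ∈ Λ, ∀ σ : List ℕ, σ <+: ρ → σ ∈ Λ) ∧
  (∀ ρ ∈ Λ, (∀ k : ℕ, ρ ++ [k] ∈ Λ) ∨ (∀ k : ℕ, ρ ++ [k] ∉ Λ)) ∧
  (∀ ν₁ ν₂ : List ℕ, ν₁.length = ν₂.length → ν₁ ∈ Λ →
      (∀ l, ν₁.getD l 0 ≤ ν₂.getD l 0) → ν₂ ∈ Λ) ∧
  ¬ ∃ x : ℕ → ℕ, ∀ n : ℕ, (List.ofFn fun i : Fin n => x i) ∈ Λ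

/-- The conditions on the rank function `h : Λ → ε + 1` from the definition of `Y_ε`. -/
def LamRank (ε : Ordinal) (Λ : Set (List ℕ)) (h : List ℕ → Ordinal) : Prop :=
  (∀ ρ ∈ Λ, h ρ ≤ ε) ∧
  h [] = ε ∧
  (∀ ρ₁ ∈ Λ, ∀ ρ₂ ∈ Λ, ρ₁ <+: ρ₂ → ρ₁ ≠ ρ₂ → h ρ₂ < h ρ₁) ∧
  (∀ ρ ∈ Λ, ∀ ζ : Ordinal, h ρ = ζ + 1 → ∀ k : ℕ, ρ ++ [k] ∈ Λ → h (ρ ++ [k]) = ζ) ∧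
  (∀ ρ ∈ Λ, Order.IsSuccLimit (h ρ) →
      ∀ β < h ρ, ∃ K : ℕ, ∀ k ≥ K, ρ ++ [k] ∈ Λ → β ≤ h (ρ ++ [k]))

/-- `(Λ, h) ∈ Y_ε`. -/
def MemY (ε : Ordinal) (Λ : Set (List ℕ)) (h : List ℕ → Ordinal) : Prop :=
  LamTree Λ ∧ LamRank ε Λ h

/-- `max(Λ)`: the elements of `Λ` with no proper extension in `Λ`. -/
def maxLam (Λ : Set (List ℕ)) : Set (List ℕ) :=
  {ρ ∈ Λ | ∀ σ ∈ Λ, ρ <+: σ → σ = ρ}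

/-- `Ω_M`: sequences of the form `η₀⌢⟨2n₀+1⟩⌢η₁⌢⟨2n₁+1⟩⌢⋯⌢η_k` with all `ηᵢ ∈ M`. -/
inductive InOmega (M : Set (List ℕ)) : List ℕ → Prop
  | base : ∀ η ∈ M, InOmega M η
  | step : ∀ ν, InOmega M ν → ∀ (n : ℕ), ∀ η ∈ M, InOmega M (ν ++ (2 * n + 1) :: η)

/-- `Ω_M⁺ = {ν⌢⟨2n⟩ : ν ∈ Ω_M, n ∈ ℕ}`. -/
def OmegaPlus (M : Set (List ℕ)) : Set (List ℕ) :=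
  {ρ | ∃ ν, InOmega M ν ∧ ∃ n : ℕ, ρ = ν ++ [2 * n]}

/-- `B_Λ`: the reals having no initial segment in `Ω_{max Λ}⁺`. -/
def BLam (Λ : Set (List ℕ)) : Set (ℕ → ℕ) :=
  {x | ∀ η ∈ OmegaPlus (maxLam Λ), ¬ (∀ i < η.length, x i = η.getD i 0)}

/-- `assemble [(η₀,n₀),…,(η_{k-1},n_{k-1})] η_k = η₀⌢⟨2n₀+1⟩⌢η₁⌢⟨2n₁+1⟩⌢⋯⌢η_k`. -/
def assemble (ps : List (List ℕ × ℕ)) (last : List ℕ) : List ℕ :=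
  ps.foldr (fun p acc => p.1 ++ (2 * p.2 + 1) :: acc) last

/- Every element of `Ω_M` can be assembled by induction on `InOmega`. For uniqueness, peel off
the first block: in `η ++ s = ν ++ t` with `η, ν ∈ M`, one of `η, ν` is a prefix of the other,
so incomparability forces `η = ν` and hence `s = t`; an empty tail never equals a tail
`(2n+1) :: _`, so the number `k` of blocks agrees as well. -/

theorem List.eq_and_eq_of_append_eq_append_of_prefix_antichain {α : Type*} {M : Set (List α)}
    (hM : ∀ η ∈ M, ∀ ν ∈ M, η <+: ν → η = ν) {η ν s t : List α} (hη : η ∈ M) (hν : ν ∈ M)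
    (h : η ++ s = ν ++ t) : η = ν ∧ s = t := by
  have hη_pre : η <+: η ++ s := List.prefix_append η s
  have hν_pre : ν <+: η ++ s := h ▸ List.prefix_append ν t
  have hην : η = ν := by
    rcases List.prefix_or_prefix_of_prefix hη_pre hν_pre with hle | hge
    · exact hM η hη ν hν hle
    · exact (hM ν hν η hη hge).symm
  subst hην
  exact ⟨rfl, List.append_cancel_left h⟩

@[simp]
theorem assemble_nil (last : List ℕ) : assemble [] last = last := rfl

@[simp]
theorem assemble_cons (p : List ℕ × ℕ) (ps : List (List ℕ × ℕ)) (last : List ℕ) :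
    assemble (p :: ps) last = p.1 ++ (2 * p.2 + 1) :: assemble ps last := rfl

theorem assemble_append_singleton (ps : List (List ℕ × ℕ)) (η last : List ℕ) (n : ℕ) :
    assemble (ps ++ [(η, n)]) last = assemble ps η ++ (2 * n + 1) :: last := by
  induction ps with
  | nil => rfl
  | cons p ps ih => simp [ih]

theorem InOmega.exists_eq_assemble {M : Set (List ℕ)} {ρ : List ℕ} (hρ : InOmega M ρ) :
    ∃ r : List (List ℕ × ℕ) × List ℕ, (∀ p ∈ r.1, p.1 ∈ M) ∧ r.2 ∈ M ∧ ρ = assemble r.1 r.2 := by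
  induction hρ with
  | base η hη => exact ⟨([], η), by simp, hη, rfl⟩
  | step ν _ n η hη ih =>
    obtain ⟨⟨ps, last⟩, hps, hlast, rfl⟩ := ih
    refine ⟨(ps ++ [(last, n)], η), ?_, hη, (assemble_append_singleton ps last η n).symm⟩
    rintro p hp
    rcases List.mem_append.mp hp with hp | hp
    · exact hps p hp
    · rw [List.mem_singleton.mp hp]
      exact hlast

theorem assemble_inj_of_prefix_antichain {M : Set (List ℕ)}
    (hM : ∀ η ∈ M, ∀ ν ∈ M, η <+: ν → η = ν) :
    ∀ {ps₁ ps₂ : List (List ℕ × ℕ)} {last₁ last₂ : List ℕ},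
      (∀ p ∈ ps₁, p.1 ∈ M) → last₁ ∈ M → (∀ p ∈ ps₂, p.1 ∈ M) → last₂ ∈ M →
      assemble ps₁ last₁ = assemble ps₂ last₂ → ps₁ = ps₂ ∧ last₁ = last₂
  | [], [], _, _, _, _, _, _, h => ⟨rfl, h⟩
  | [], q :: _, last₁, _, _, hl₁, h₂, _, h => by
    have := List.eq_and_eq_of_append_eq_append_of_prefix_antichain hM hl₁
      (h₂ q List.mem_cons_self) ((List.append_nil last₁).trans h)
    simp at this
  | p :: _, [], _, last₂, h₁, _, _, hl₂, h => by
    have := List.eq_and_eq_of_append_eq_append_of_prefix_antichain hM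
      (h₁ p List.mem_cons_self) hl₂ (h.trans (List.append_nil last₂).symm)
    simp at this
  | p :: _, q :: _, _, _, h₁, hl₁, h₂, hl₂, h => by
    obtain ⟨hη, htail⟩ := List.eq_and_eq_of_append_eq_append_of_prefix_antichain hM
      (h₁ p List.mem_cons_self) (h₂ q List.mem_cons_self) h
    obtain ⟨hn, hrest⟩ : 2 * p.2 + 1 = 2 * q.2 + 1 ∧ _ := List.cons.inj htail
    obtain ⟨rfl, rfl⟩ := assemble_inj_of_prefix_antichain hM
      (fun r hr => h₁ r (List.mem_cons_of_mem _ hr)) hl₁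
      (fun r hr => h₂ r (List.mem_cons_of_mem _ hr)) hl₂ hrest
    have hpq : p = q := Prod.ext hη (by omega)
    exact ⟨hpq ▸ rfl, rfl⟩

/-- If `M` consists of pairwise `⊑`-incomparable finite sequences,
then every element of `Ω_M` has a unique representation
`η₀⌢⟨2n₀+1⟩⌢η₁⌢⟨2n₁+1⟩⌢⋯⌢η_k` with all `ηᵢ ∈ M`: the number `k`, the sequences
`ηᵢ ∈ M` and the numbers `nᵢ` are uniquely determined. -/
theorem Omega_unique_decomposition
    (M : Set (List ℕ))
    (hM : ∀ η ∈ M, ∀ ν ∈ M, η <+: ν → η = ν) :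
    ∀ ρ, InOmega M ρ →
      ∃! r : List (List ℕ × ℕ) × List ℕ,
        (∀ p ∈ r.1, p.1 ∈ M) ∧ r.2 ∈ M ∧ ρ = assemble r.1 r.2 := by
  intro ρ hρ
  obtain ⟨r, hr⟩ := hρ.exists_eq_assemble
  refine ⟨r, hr, fun r' hr' => ?_⟩
  obtain ⟨hps, hlast⟩ := assemble_inj_of_prefix_antichain hM hr'.1 hr'.2.1 hr.1 hr.2.1
    (hr'.2.2.symm.trans hr.2.2)
  exact Prod.ext hps hlast
end

section
/- For all countable ordinals ε < ζ and every (Λ₁, h₁) ∈ Y_ε, there exists (Λ₂, h₂) ∈ Y_ζ such that Λ₁ ⊆ Λ₂. -/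
/-! We prove more generally that every prefix-closed `Λ` carrying a strictly decreasing rank
`g ≤ ζ` (`RankBounded ζ Λ g`) extends to an element of `Y_ζ`, by induction on `ζ`. Unlike
membership in `Y_ζ`, this weaker property is preserved under unions. For `ζ > 0` pick levels
`δ 0 ≤ δ 1 ≤ ⋯ < ζ` dominating the ranks of the nodes `⟨k⟩`, all equal to `θ` if `ζ = θ + 1`
and cofinal in `ζ` if `ζ` is a limit (which needs `ζ` countable). By induction, the union of the
`k`-th subtree of `Λ` with the tree already built for `k - 1` extends to a tree in `Y_{δ k}`;
hanging this increasing chain below a new root gives the element of `Y_ζ`, the monotonicity of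
the chain being exactly what condition (ii) requires. -/

open Order Cardinal

structure RankBounded (ζ : Ordinal) (Λ : Set (List ℕ)) (g : List ℕ → Ordinal) : Prop where
  prefix_mem : ∀ ρ ∈ Λ, ∀ σ, σ <+: ρ → σ ∈ Λ
  le : ∀ ρ ∈ Λ, g ρ ≤ ζ
  lt_of_prefix : ∀ ρ₁ ∈ Λ, ∀ ρ₂ ∈ Λ, ρ₁ <+: ρ₂ → ρ₁ ≠ ρ₂ → g ρ₂ < g ρ₁

theorem MemY.rankBounded {ε : Ordinal} {Λ : Set (List ℕ)} {g : List ℕ → Ordinal}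
    (h : MemY ε Λ g) : RankBounded ε Λ g :=
  ⟨h.1.2.1, h.2.1, h.2.2.2.1⟩

namespace RankBounded

variable {ζ μ : Ordinal} {Λ A B : Set (List ℕ)} {g a b : List ℕ → Ordinal}

theorem mono (h : RankBounded ζ Λ g) (hζμ : ζ ≤ μ) : RankBounded μ Λ g :=
  ⟨h.prefix_mem, fun ρ hρ => (h.le ρ hρ).trans hζμ, h.lt_of_prefix⟩

theorem union (hA : RankBounded μ A a) (hB : RankBounded μ B b) :
    RankBounded μ (A ∪ B) (A.indicator a ⊔ B.indicator b) := by
  refine ⟨?_, ?_, ?_⟩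
  · rintro ρ (hρ | hρ) σ hσ
    exacts [Or.inl (hA.prefix_mem ρ hρ σ hσ), Or.inr (hB.prefix_mem ρ hρ σ hσ)]
  · intro ρ _
    refine sup_le ?_ ?_
    · by_cases h : ρ ∈ A <;> simp [h, hA.le]
    · by_cases h : ρ ∈ B <;> simp [h, hB.le]
  · intro ρ₁ _ ρ₂ h₂ hpre hne
    have step : ∀ {X : Set (List ℕ)} {x : List ℕ → Ordinal}, RankBounded μ X x → ρ₂ ∈ X →
        X.indicator x ρ₂ < X.indicator x ρ₁ := fun hX h₂X => by
      have h₁X := hX.prefix_mem _ h₂X _ hpre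
      rw [Set.indicator_of_mem h₂X, Set.indicator_of_mem h₁X]
      exact hX.lt_of_prefix _ h₁X _ h₂X hpre hne
    have hpos : 0 < (A.indicator a ⊔ B.indicator b) ρ₁ := by
      rcases h₂ with h | h
      exacts [(zero_le.trans_lt (step hA h)).trans_le le_sup_left,
        (zero_le.trans_lt (step hB h)).trans_le le_sup_right]
    refine sup_lt_iff.mpr ⟨?_, ?_⟩
    · by_cases h : ρ₂ ∈ A
      · exact (step hA h).trans_le le_sup_left
      · rwa [Set.indicator_of_notMem h]
    · by_cases h : ρ₂ ∈ B
      · exact (step hB h).trans_le le_sup_right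
      · rwa [Set.indicator_of_notMem h]

theorem subtree (h : RankBounded ζ Λ g) (k : ℕ) (hμ : [k] ∈ Λ → g [k] ≤ μ) :
    RankBounded μ (List.cons k ⁻¹' Λ) (fun ρ => g (k :: ρ)) := by
  refine ⟨fun ρ hρ σ hσ => h.prefix_mem _ hρ _ (List.cons_prefix_cons.mpr ⟨rfl, hσ⟩), ?_,
    fun ρ₁ h₁ ρ₂ h₂ hpre hne => h.lt_of_prefix _ h₁ _ h₂ (List.cons_prefix_cons.mpr ⟨rfl, hpre⟩)
      (by simpa using hne)⟩
  intro ρ hρ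
  have hk : [k] ∈ Λ := h.prefix_mem _ hρ [k] (List.cons_prefix_cons.mpr ⟨rfl, List.nil_prefix⟩)
  refine le_trans ?_ (hμ hk)
  rcases eq_or_ne ρ [] with rfl | hne
  · rfl
  · exact (h.lt_of_prefix _ hk _ hρ (List.cons_prefix_cons.mpr ⟨rfl, List.nil_prefix⟩)
      (by simpa using hne.symm)).le

theorem lt_of_singleton_mem (h : RankBounded ζ Λ g) {k : ℕ} (hk : [k] ∈ Λ) : g [k] < ζ :=
  (h.lt_of_prefix [] (h.prefix_mem _ hk [] List.nil_prefix) [k] hk List.nil_prefix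
    (by simp)).trans_le (h.le [] (h.prefix_mem _ hk [] List.nil_prefix))

theorem subset_singleton_nil (h : RankBounded 0 Λ g) : Λ ⊆ {[]} := by
  intro ρ hρ
  by_contra hne
  exact not_lt_zero <| (h.lt_of_prefix [] (h.prefix_mem _ hρ [] List.nil_prefix) ρ hρ
    List.nil_prefix (Ne.symm hne)).trans_le (h.le [] (h.prefix_mem _ hρ [] List.nil_prefix))

end RankBounded

theorem memY_singleton_nil (ζ : Ordinal) : MemY ζ {[]} (fun _ => ζ) := by
  refine ⟨⟨⟨[], rfl⟩, ?_, ?_, ?_, ?_⟩, ?_, rfl, ?_, ?_, ?_⟩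
  · rintro ρ rfl σ hσ
    exact List.prefix_nil.mp hσ
  · rintro ρ rfl
    exact Or.inr fun k => by simp
  · rintro ν₁ ν₂ hlen rfl -
    exact List.length_eq_zero_iff.mp hlen.symm
  · rintro ⟨x, hx⟩
    simpa using hx 1
  · rintro ρ rfl
    rfl
  · rintro ρ₁ rfl ρ₂ rfl - hne
    exact absurd rfl hne
  · rintro ρ rfl θ - k hk
    simp at hk
  · rintro ρ rfl - β -
    exact ⟨0, fun k _ hk => by simp at hk⟩

def joinTree (S : ℕ → Set (List ℕ)) : Set (List ℕ)
  | [] => True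
  | k :: σ => σ ∈ S k

def joinRank (ζ : Ordinal) (g : ℕ → List ℕ → Ordinal) : List ℕ → Ordinal
  | [] => ζ
  | k :: σ => g k σ

section joinTree

variable {S : ℕ → Set (List ℕ)}

@[simp] theorem cons_mem_joinTree {k : ℕ} {σ : List ℕ} : k :: σ ∈ joinTree S ↔ σ ∈ S k :=
  Iff.rfl

theorem subset_joinTree {Λ : Set (List ℕ)} (h : ∀ k, List.cons k ⁻¹' Λ ⊆ S k) :
    Λ ⊆ joinTree S
  | [], _ => trivial
  | k :: _, hσ => h k hσ

theorem lamTree_joinTree (hS : ∀ k, LamTree (S k)) (hmono : Monotone S) :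
    LamTree (joinTree S) := by
  refine ⟨⟨[], trivial⟩, ?_, ?_, ?_, ?_⟩
  · rintro (_ | ⟨k, ρ⟩) hρ (_ | ⟨m, σ⟩) hσ
    · trivial
    · simp at hσ
    · trivial
    · obtain ⟨rfl, hσρ⟩ := List.cons_prefix_cons.mp hσ
      exact (hS m).2.1 ρ hρ σ hσρ
  · rintro (_ | ⟨k, ρ⟩) hρ
    · exact Or.inl fun m => by
        obtain ⟨ρ, hρ⟩ := (hS m).1
        exact (hS m).2.1 ρ hρ [] List.nil_prefix
    · exact (hS k).2.2.1 ρ hρ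
  · rintro (_ | ⟨k, ρ₁⟩) (_ | ⟨m, ρ₂⟩) hlen hρ₁ hle
    · trivial
    · simp at hlen
    · simp at hlen
    · exact (hS m).2.2.2.1 ρ₁ ρ₂ (by simpa using hlen) (hmono (by simpa using hle 0) hρ₁)
        fun l => by simpa using hle (l + 1)
  · rintro ⟨x, hx⟩
    refine (hS (x 0)).2.2.2.2 ⟨fun i => x (i + 1), fun n => ?_⟩
    simpa [List.ofFn_succ] using hx (n + 1)

theorem lamRank_joinTree {ζ : Ordinal} {δ : ℕ → Ordinal} {g : ℕ → List ℕ → Ordinal}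
    (hS : ∀ k, LamRank (δ k) (S k) (g k)) (hδ : ∀ k, δ k < ζ)
    (hsucc : ∀ θ, ζ = θ + 1 → ∀ k, δ k = θ)
    (hlim : IsSuccLimit ζ → ∀ β < ζ, ∃ K, ∀ k ≥ K, β ≤ δ k) :
    LamRank ζ (joinTree S) (joinRank ζ g) := by
  refine ⟨?_, rfl, ?_, ?_, ?_⟩
  · rintro (_ | ⟨k, ρ⟩) hρ
    · rfl
    · exact ((hS k).1 ρ hρ).trans (hδ k).le
  · rintro (_ | ⟨k, ρ₁⟩) hρ₁ (_ | ⟨m, ρ₂⟩) hρ₂ hpre hne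
    · exact absurd rfl hne
    · exact ((hS m).1 ρ₂ hρ₂).trans_lt (hδ m)
    · simp at hpre
    · obtain ⟨rfl, hpre'⟩ := List.cons_prefix_cons.mp hpre
      exact (hS k).2.2.1 ρ₁ hρ₁ ρ₂ hρ₂ hpre' (by simpa using hne)
  · rintro (_ | ⟨k, ρ⟩) hρ θ hθ m hm
    · exact ((hS m).2.1).trans (hsucc θ hθ m)
    · exact (hS k).2.2.2.1 ρ hρ θ hθ m hm
  · rintro (_ | ⟨k, ρ⟩) hρ hζ β hβ
    · obtain ⟨K, hK⟩ := hlim hζ β hβ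
      exact ⟨K, fun m hm _ => (hK m hm).trans_eq (hS m).2.1.symm⟩
    · exact (hS k).2.2.2.2 ρ hρ hζ β hβ

theorem memY_joinTree {ζ : Ordinal} {δ : ℕ → Ordinal} {g : ℕ → List ℕ → Ordinal}
    (hS : ∀ k, MemY (δ k) (S k) (g k)) (hmono : Monotone S)
    (hδ : ∀ k, δ k < ζ) (hsucc : ∀ θ, ζ = θ + 1 → ∀ k, δ k = θ)
    (hlim : IsSuccLimit ζ → ∀ β < ζ, ∃ K, ∀ k ≥ K, β ≤ δ k) :
    MemY ζ (joinTree S) (joinRank ζ g) :=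
  ⟨lamTree_joinTree (fun k => (hS k).1) hmono, lamRank_joinTree (fun k => (hS k).2) hδ hsucc hlim⟩

end joinTree

theorem Ordinal.countable_Iio_of_lt_ord_aleph_one {ζ : Ordinal} (hζ : ζ < (aleph 1).ord) :
    (Set.Iio ζ).Countable := by
  rw [← le_aleph0_iff_set_countable, Cardinal.mk_Iio_ordinal, lift_le_aleph0, ← lt_aleph_one_iff]
  exact lt_ord.mp hζ

theorem exists_monotone_levels {ζ : Ordinal} (hζ0 : ζ ≠ 0) (hζ : ζ < (aleph 1).ord)
    (b : ℕ → Ordinal) (hb : ∀ k, b k < ζ) :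
    ∃ δ : ℕ → Ordinal, Monotone δ ∧ (∀ k, b k ≤ δ k) ∧ (∀ k, δ k < ζ) ∧
      (∀ θ, ζ = θ + 1 → ∀ k, δ k = θ) ∧ (IsSuccLimit ζ → ∀ β < ζ, ∃ K, ∀ k ≥ K, β ≤ δ k) := by
  rcases Ordinal.zero_or_succ_or_isSuccLimit ζ with rfl | ⟨θ, rfl⟩ | hlim
  · exact absurd rfl hζ0
  · refine ⟨fun _ => θ, monotone_const, fun k => lt_succ_iff.mp (hb k), fun _ => lt_succ θ,
      fun θ' h _ => succ_injective ?_, fun h => absurd h (not_isSuccLimit_succ θ)⟩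
    rwa [succ_eq_add_one, succ_eq_add_one]
  · have hpos : (0 : Ordinal) < ζ := pos_iff_ne_zero.mpr hζ0
    obtain ⟨f, hf⟩ := (Ordinal.countable_Iio_of_lt_ord_aleph_one hζ).exists_eq_range ⟨0, hpos⟩
    have hfζ : ∀ j, f j < ζ := fun j => (hf ▸ Set.mem_range_self j : f j ∈ Set.Iio ζ)
    let c : ℕ → Ordinal := fun j => max (f j) (b j)
    refine ⟨fun k => (Finset.range (k + 1)).sup c, fun m n hmn => ?_, fun k => ?_, fun k => ?_,
      fun θ h => absurd (h ▸ hlim) (succ_eq_add_one θ ▸ not_isSuccLimit_succ θ),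
      fun _ β hβ => ?_⟩
    · exact Finset.sup_mono (Finset.range_subset_range.mpr (by omega))
    · exact (le_max_right _ _).trans (Finset.le_sup (f := c) (Finset.self_mem_range_succ k))
    · exact (Finset.sup_lt_iff hpos).mpr fun j _ => max_lt (hfζ j) (hb j)
    · obtain ⟨n, rfl⟩ : β ∈ Set.range f := hf ▸ hβ
      exact ⟨n, fun k hk => (le_max_left _ _).trans
        (Finset.le_sup (f := c) (Finset.mem_range.mpr (by omega)))⟩

theorem exists_seq_of_exists_succ {α : Type*} (P : ℕ → α → Prop) (R : α → α → Prop)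
    (h0 : ∃ a, P 0 a) (hs : ∀ k a, P k a → ∃ b, P (k + 1) b ∧ R a b) :
    ∃ f : ℕ → α, (∀ k, P k (f k)) ∧ ∀ k, R (f k) (f (k + 1)) := by
  obtain ⟨a₀, ha₀⟩ := h0
  choose! next hnext hR using hs
  have hf : ∀ k, P k (Nat.rec a₀ next k) := fun k => by
    induction k with
    | zero => exact ha₀
    | succ k ih => exact hnext k _ ih
  exact ⟨_, hf, fun k => hR k _ (hf k)⟩

theorem exists_memY_chain {δ : ℕ → Ordinal} (hδ : Monotone δ) {T : ℕ → Set (List ℕ)}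
    {t : ℕ → List ℕ → Ordinal} (hT : ∀ k, RankBounded (δ k) (T k) (t k))
    (hext : ∀ k Λ g, RankBounded (δ k) Λ g → ∃ Λ' g', MemY (δ k) Λ' g' ∧ Λ ⊆ Λ') :
    ∃ (S : ℕ → Set (List ℕ)) (s : ℕ → List ℕ → Ordinal),
      (∀ k, MemY (δ k) (S k) (s k)) ∧ Monotone S ∧ ∀ k, T k ⊆ S k := by
  obtain ⟨F, hF, hFS⟩ := exists_seq_of_exists_succ
    (fun k (p : Set (List ℕ) × (List ℕ → Ordinal)) => MemY (δ k) p.1 p.2 ∧ T k ⊆ p.1)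
    (fun p q => p.1 ⊆ q.1) (by
      obtain ⟨S, s, hS, hTS⟩ := hext 0 _ _ (hT 0)
      exact ⟨(S, s), hS, hTS⟩) (by
      rintro k ⟨S, s⟩ ⟨hS, -⟩
      obtain ⟨S', s', hS', hSS'⟩ := hext (k + 1) _ _
        ((hS.rankBounded.mono (hδ k.le_succ)).union (hT (k + 1)))
      exact ⟨(S', s'), ⟨hS', Set.subset_union_right.trans hSS'⟩, Set.subset_union_left.trans hSS'⟩)
  exact ⟨fun k => (F k).1, fun k => (F k).2, fun k => (hF k).1, monotone_nat_of_le_succ hFS,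
    fun k => (hF k).2⟩

theorem exists_memY_superset {ζ : Ordinal} (hζ : ζ < (aleph 1).ord) {Λ : Set (List ℕ)}
    {g : List ℕ → Ordinal} (hΛ : RankBounded ζ Λ g) :
    ∃ Λ' g', MemY ζ Λ' g' ∧ Λ ⊆ Λ' := by
  induction ζ using WellFoundedLT.induction generalizing Λ g with
  | _ ζ IH =>
  rcases eq_or_ne ζ 0 with rfl | hζ0
  · exact ⟨{[]}, _, memY_singleton_nil 0, hΛ.subset_singleton_nil⟩
  classical
  let b : ℕ → Ordinal := fun k => if [k] ∈ Λ then g [k] else 0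
  have hb : ∀ k, b k < ζ := fun k => by
    by_cases hk : [k] ∈ Λ
    · simpa [b, hk] using hΛ.lt_of_singleton_mem hk
    · simpa [b, hk] using pos_iff_ne_zero.mpr hζ0
  obtain ⟨δ, hδ, hbδ, hδζ, hsucc, hlim⟩ := exists_monotone_levels hζ0 hζ b hb
  obtain ⟨S, s, hS, hSmono, hΛS⟩ := exists_memY_chain hδ
    (fun k => hΛ.subtree k fun hk => by simpa [b, hk] using hbδ k)
    (fun k _ _ => IH (δ k) (hδζ k) ((hδζ k).trans hζ))
  exact ⟨_, _, memY_joinTree hS hSmono hδζ hsucc hlim, subset_joinTree hΛS⟩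

/-- For countable ordinals `ε < ζ` and `(Λ₁, h₁) ∈ Y_ε`, there is
`(Λ₂, h₂) ∈ Y_ζ` with `Λ₁ ⊆ Λ₂`. -/
theorem Y_extension (ε ζ : Ordinal) (hεζ : ε < ζ) (hζ : ζ < (Cardinal.aleph 1).ord)
    (Λ₁ : Set (List ℕ)) (h₁ : List ℕ → Ordinal) (hY : MemY ε Λ₁ h₁) :
    ∃ (Λ₂ : Set (List ℕ)) (h₂ : List ℕ → Ordinal), MemY ζ Λ₂ h₂ ∧ Λ₁ ⊆ Λ₂ :=
  exists_memY_superset hζ (hY.rankBounded.mono hεζ.le)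
end
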